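/- arXiv:2504.01836 — 7 statements merged into one kernel-verified Lean document; each statement's English description precedes it below -/
import Mathlib

section
/- For nonnegative integers n1, n2, ..., n_{k+1} with n_{k+1} ≥ 1, the sum over all choices of i_1 ∈ {0,...,n_1}, ..., i_k ∈ {0,...,n_k} of the product of multinomial coefficients C(i_1+...+i_k; i_1,...,i_k) · C(n_1-i_1+...+n_k-i_k+n_{k+1}-1; n_1-i_1,...,n_k-i_k, n_{k+1}-1) equals the multinomial coefficient C(n_1+...+n_k+n_{k+1}; n_1,...,n_k,n_{k+1}). -/
open Finset

lemma multinomial_map_emb {α β : Type*} (e : α ↪ β) (s : Finset α) (f : β → ℕ) :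
    Nat.multinomial (s.map e) f = Nat.multinomial s (f ∘ e) := by
  simp [Nat.multinomial, Finset.sum_map, Finset.prod_map, Function.comp]

lemma multinomial_snoc {k : ℕ} (f : Fin k → ℕ) (a : ℕ) :
    Nat.multinomial Finset.univ (Fin.snoc f a) =
      (∑ t, f t + a).choose a * Nat.multinomial Finset.univ f := by
  rw [Fin.univ_castSuccEmb, Nat.multinomial_cons, Fin.snoc_last, Finset.sum_map,
    multinomial_map_emb]
  have h1 : ((Fin.snoc f a : Fin (k+1) → ℕ) ∘ Fin.castSuccEmb) = f := by
    funext t; exact Fin.snoc_castSucc (α := fun _ => ℕ) a f t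
  have h2 : ∀ t : Fin k, (Fin.snoc f a : Fin (k+1) → ℕ) (Fin.castSuccEmb t) = f t := by
    intro t; exact Fin.snoc_castSucc (α := fun _ => ℕ) a f t
  rw [h1, Finset.sum_congr rfl (fun t _ => h2 t), Nat.add_comm a]

lemma sum_piFinset_snoc {k : ℕ} (p : Fin (k+1) → Finset ℕ) (f : (Fin (k+1) → ℕ) → ℕ) :
    ∑ i ∈ Fintype.piFinset p, f i =
      ∑ a ∈ p (Fin.last k), ∑ j ∈ Fintype.piFinset (fun t : Fin k => p t.castSucc),
        f (Fin.snoc j a) := by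
  rw [← Finset.sum_product']
  refine Finset.sum_nbij' (fun i => (i (Fin.last k), Fin.init i))
      (fun q => Fin.snoc q.2 q.1) ?_ ?_ ?_ ?_ ?_
  · intro i hi
    simp only [Fintype.mem_piFinset] at hi
    simp only [Finset.mem_product, Fintype.mem_piFinset]
    exact ⟨hi _, fun t => hi _⟩
  · intro q hq
    simp only [Finset.mem_product, Fintype.mem_piFinset] at hq
    simp only [Fintype.mem_piFinset]
    intro t
    refine Fin.lastCases ?_ ?_ t
    · simpa using hq.1
    · intro t; simpa using hq.2 t
  · intro i _; exact Fin.snoc_init_self i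
  · intro q _; simp [Fin.init_snoc]
  · intro i _; rw [Fin.snoc_init_self]


lemma hockey (c : ℕ) : ∀ s : ℕ,
    ∑ m ∈ Finset.range (s+1), (m + c).choose c = (s + c + 1).choose (c+1)
  | 0 => by simp
  | (s+1) => by
    rw [Finset.sum_range_succ, hockey c s]
    have : s + 1 + c + 1 = (s + c + 1) + 1 := by omega
    rw [this, Nat.choose_succ_succ' (s+c+1) c, Nat.add_right_comm s 1 c]
    omega

lemma hockey' (c s : ℕ) :
    ∑ m ∈ Finset.range (s+1), (s - m + c).choose c = (s + c + 1).choose (c+1) := by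
  rw [← hockey c s, ← Finset.sum_range_reflect]
  exact Finset.sum_congr rfl (fun m hm => by
    simp only [Finset.mem_range] at hm
    congr 1; omega)

lemma claimA : ∀ (k : ℕ) (n : Fin k → ℕ) (m : ℕ), m ≤ ∑ t, n t →
    ∑ i ∈ Fintype.piFinset (fun t : Fin k => Finset.range (n t + 1)),
      (if ∑ t, i t = m then
        Nat.multinomial Finset.univ i * Nat.multinomial Finset.univ (fun t => n t - i t)
      else 0) =
      Nat.multinomial Finset.univ n
  | 0 => by
    intro n m hm
    have hm0 : m = 0 := by simpa using hm
    subst hm0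
    rw [Fintype.piFinset_of_isEmpty]
    simp [Finset.univ_eq_empty (α := Fin 0)]
  | (k+1) => by
    intro n m hm
    have hsum : ∑ t, n t = (∑ t : Fin k, n t.castSucc) + n (Fin.last k) :=
      Fin.sum_univ_castSucc n
    set s' := ∑ t : Fin k, n t.castSucc with hs'
    set nK := n (Fin.last k) with hnK
    rw [sum_piFinset_snoc]
    have key : ∀ a ∈ Finset.range (nK + 1),
        ∑ j ∈ Fintype.piFinset (fun t : Fin k => Finset.range (n t.castSucc + 1)),
          (if ∑ t, (Fin.snoc j a : Fin (k+1) → ℕ) t = m then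
            Nat.multinomial Finset.univ (Fin.snoc j a) *
              Nat.multinomial Finset.univ (fun t => n t - (Fin.snoc j a : Fin (k+1) → ℕ) t)
          else 0) =
        m.choose a * (s' + nK - m).choose (nK - a) *
          Nat.multinomial Finset.univ (fun t : Fin k => n t.castSucc) := by
      intro a ha
      rw [Finset.mem_range] at ha
      have haK : a ≤ nK := by omega
      -- rewrite each term
      have hterm : ∀ j ∈ Fintype.piFinset (fun t : Fin k => Finset.range (n t.castSucc + 1)),
          (if ∑ t, (Fin.snoc j a : Fin (k+1) → ℕ) t = m then
            Nat.multinomial Finset.univ (Fin.snoc j a) *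
              Nat.multinomial Finset.univ (fun t => n t - (Fin.snoc j a : Fin (k+1) → ℕ) t)
          else 0) =
          m.choose a * (s' + nK - m).choose (nK - a) *
            (if ∑ t, j t = m - a ∧ a ≤ m then
              Nat.multinomial Finset.univ j *
                Nat.multinomial Finset.univ (fun t => n t.castSucc - j t)
            else 0) := by
        intro j hj
        simp only [Fintype.mem_piFinset, Finset.mem_range] at hj
        have hjle : ∀ t, j t ≤ n t.castSucc := fun t => by have := hj t; omega
        have hsj : ∑ t, j t ≤ s' := Finset.sum_le_sum (fun t _ => hjle t)
        have h1 : ∑ t, (Fin.snoc j a : Fin (k+1) → ℕ) t = (∑ t, j t) + a := by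
          rw [Fin.sum_univ_castSucc]
          simp
        have h2 : (fun t : Fin (k+1) => n t - (Fin.snoc j a : Fin (k+1) → ℕ) t) =
            Fin.snoc (fun t => n t.castSucc - j t) (nK - a) := by
          funext t
          refine Fin.lastCases ?_ ?_ t <;> simp [hnK]
        have h3 : ∑ t, (n t.castSucc - j t) = s' - ∑ t, j t := by
          rw [hs', eq_comm, Finset.sum_tsub_distrib Finset.univ (fun t _ => hjle t)]
        rw [h1, h2, multinomial_snoc, multinomial_snoc, h3]
        by_cases hc : (∑ t, j t) + a = m
        · rw [if_pos hc, if_pos ⟨by omega, by omega⟩]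
          have e1 : (∑ t, j t) + a = m := hc
          have e2 : s' - ∑ t, j t + (nK - a) = s' + nK - m := by omega
          rw [e1, e2]
          ring
        · rw [if_neg hc, if_neg (by omega)]
          ring
      rw [Finset.sum_congr rfl hterm, ← Finset.mul_sum]
      -- now evaluate the inner if-sum
      by_cases ham : a ≤ m
      · by_cases hma : m - a ≤ s'
        · have := claimA k (fun t => n t.castSucc) (m - a) hma
          have hiff : ∀ j : Fin k → ℕ, ((∑ t, j t = m - a ∧ a ≤ m) ↔ (∑ t, j t = m - a)) :=
            fun j => ⟨fun h => h.1, fun h => ⟨h, ham⟩⟩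
          simp only [hiff]
          rw [this]
        · -- inner sum is zero, and the choose factor is zero
          have hz : ∀ j ∈ Fintype.piFinset (fun t : Fin k => Finset.range (n t.castSucc + 1)),
              (if ∑ t, j t = m - a ∧ a ≤ m then
                Nat.multinomial Finset.univ j *
                  Nat.multinomial Finset.univ (fun t => n t.castSucc - j t)
              else 0) = 0 := by
            intro j hj
            simp only [Fintype.mem_piFinset, Finset.mem_range] at hj
            have hsj : ∑ t, j t ≤ s' :=
              Finset.sum_le_sum (fun t _ => by have := hj t; omega)
            rw [if_neg (by omega)]
          rw [Finset.sum_eq_zero hz]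
          have : (s' + nK - m).choose (nK - a) = 0 :=
            Nat.choose_eq_zero_of_lt (by omega)
          rw [this]
          ring
      · have hz : ∀ j ∈ Fintype.piFinset (fun t : Fin k => Finset.range (n t.castSucc + 1)),
            (if ∑ t, j t = m - a ∧ a ≤ m then
              Nat.multinomial Finset.univ j *
                Nat.multinomial Finset.univ (fun t => n t.castSucc - j t)
            else 0) = 0 := by
          intro j _
          rw [if_neg (by omega)]
        rw [Finset.sum_eq_zero hz]
        have : m.choose a = 0 := Nat.choose_eq_zero_of_lt (by omega)
        rw [this]
        ring
    rw [Finset.sum_congr rfl key, ← Finset.sum_mul]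
    have hvdm : ∑ a ∈ Finset.range (nK + 1), m.choose a * (s' + nK - m).choose (nK - a) =
        (s' + nK).choose nK := by
      have h := Nat.add_choose_eq m (s' + nK - m) nK
      rw [Finset.Nat.sum_antidiagonal_eq_sum_range_succ_mk] at h
      have : m + (s' + nK - m) = s' + nK := by omega
      rw [this] at h
      exact h.symm
    rw [hvdm]
    conv_rhs => rw [← Fin.snoc_init_self n]
    rw [multinomial_snoc]
    rfl

/-- Multinomial coefficient convolution identity (Lemma in the paper). -/
theorem multinomial_convolution (k : ℕ) (n : Fin k → ℕ) (nlast : ℕ) (hn : 1 ≤ nlast) :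
    ∑ i ∈ Fintype.piFinset (fun t : Fin k => Finset.range (n t + 1)),
      Nat.multinomial Finset.univ i *
        Nat.multinomial Finset.univ (Fin.snoc (fun t => n t - i t) (nlast - 1)) =
      Nat.multinomial Finset.univ (Fin.snoc n nlast) := by
  have hterm : ∀ i ∈ Fintype.piFinset (fun t : Fin k => Finset.range (n t + 1)),
      Nat.multinomial Finset.univ i *
        Nat.multinomial Finset.univ (Fin.snoc (fun t => n t - i t) (nlast - 1)) =
      ((∑ t, n t) - (∑ t, i t) + (nlast - 1)).choose (nlast - 1) *
        (Nat.multinomial Finset.univ i *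
          Nat.multinomial Finset.univ (fun t => n t - i t)) := by
    intro i hi
    simp only [Fintype.mem_piFinset, Finset.mem_range] at hi
    have hile : ∀ t, i t ≤ n t := fun t => by have := hi t; omega
    rw [multinomial_snoc, Finset.sum_tsub_distrib Finset.univ (fun t _ => hile t)]
    ring
  rw [Finset.sum_congr rfl hterm]
  rw [← Finset.sum_fiberwise_of_maps_to (g := fun i => ∑ t, i t)
      (t := Finset.range ((∑ t, n t) + 1))
      (fun i hi => by
        simp only [Fintype.mem_piFinset, Finset.mem_range] at hi ⊢
        exact Nat.lt_succ_of_le (Finset.sum_le_sum (fun t _ => by have := hi t; omega)))]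
  have hfiber : ∀ m ∈ Finset.range ((∑ t, n t) + 1),
      (∑ i ∈ (Fintype.piFinset (fun t : Fin k => Finset.range (n t + 1))).filter
          (fun i => ∑ t, i t = m),
        ((∑ t, n t) - (∑ t, i t) + (nlast - 1)).choose (nlast - 1) *
          (Nat.multinomial Finset.univ i *
            Nat.multinomial Finset.univ (fun t => n t - i t))) =
      ((∑ t, n t) - m + (nlast - 1)).choose (nlast - 1) *
        Nat.multinomial Finset.univ n := by
    intro m hm
    rw [Finset.mem_range] at hm
    have h1 : ∀ i ∈ (Fintype.piFinset (fun t : Fin k => Finset.range (n t + 1))).filter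
        (fun i => ∑ t, i t = m),
        ((∑ t, n t) - (∑ t, i t) + (nlast - 1)).choose (nlast - 1) *
          (Nat.multinomial Finset.univ i *
            Nat.multinomial Finset.univ (fun t => n t - i t)) =
        ((∑ t, n t) - m + (nlast - 1)).choose (nlast - 1) *
          (Nat.multinomial Finset.univ i *
            Nat.multinomial Finset.univ (fun t => n t - i t)) := by
      intro i hi
      rw [Finset.mem_filter] at hi
      rw [hi.2]
    rw [Finset.sum_congr rfl h1, ← Finset.mul_sum, Finset.sum_filter,
      claimA k n m (by omega)]
  rw [Finset.sum_congr rfl hfiber, ← Finset.sum_mul, hockey' (nlast - 1) (∑ t, n t),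
    multinomial_snoc]
  have e1 : (∑ t, n t) + (nlast - 1) + 1 = (∑ t, n t) + nlast := by omega
  have e2 : nlast - 1 + 1 = nlast := by omega
  rw [e1, e2]
end

section
/- For every nonnegative integer m and every real x ∈ (0,1), the series ∑_{ℓ=0}^∞ C(m+ℓ, ℓ) x^ℓ · ℓ²/(ℓ+m+1)² converges and equals x^{-(m+1)} [ (m+1) ∫_0^x u^{m+1}(log x - log u)/(1-u)^{m+3} du + (m+1)² ∫_0^x u^{m+2}(log x - log u)/(1-u)^{m+3} du ]. -/
open MeasureTheory Real


lemma contAux (k : ℕ) : Continuous fun u : ℝ => u ^ (k + 1) * Real.log u := by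
  have : (fun u : ℝ => u ^ (k + 1) * Real.log u) = fun u : ℝ => u ^ k * (u * Real.log u) := by
    funext u; ring
  rw [this]
  exact (continuous_pow k).mul Real.continuous_mul_log

lemma contAux2 (k : ℕ) (x : ℝ) :
    Continuous fun u : ℝ => u ^ (k + 1) * (Real.log x - Real.log u) := by
  have : (fun u : ℝ => u ^ (k + 1) * (Real.log x - Real.log u)) =
      fun u : ℝ => u ^ (k + 1) * Real.log x - u ^ (k + 1) * Real.log u := by
    funext u; ring
  rw [this]
  exact ((continuous_pow _).mul continuous_const).sub (contAux k)

lemma integral_pow_mul_log (k : ℕ) {x : ℝ} (hx : 0 < x) :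
    ∫ u in (0:ℝ)..x, u ^ (k + 1) * (Real.log x - Real.log u)
      = x ^ (k + 2) / ((k : ℝ) + 2) ^ 2 := by
  set F : ℝ → ℝ := fun u =>
    u ^ (k + 2) * (Real.log x - Real.log u) / ((k : ℝ) + 2) + u ^ (k + 2) / ((k : ℝ) + 2) ^ 2
    with hF
  have hk : ((k : ℝ) + 2) ≠ 0 := by positivity
  have hcont : ContinuousOn F (Set.Icc 0 x) :=
    (((contAux2 (k + 1) x).div_const _).add ((continuous_pow _).div_const _)).continuousOn
  have hderiv : ∀ t ∈ Set.Ioo (0:ℝ) x,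
      HasDerivAt F (t ^ (k + 1) * (Real.log x - Real.log t)) t := by
    intro t ht
    have ht0 : t ≠ 0 := ne_of_gt ht.1
    have h1 : HasDerivAt (fun u : ℝ => u ^ (k + 2)) (((k:ℝ) + 2) * t ^ (k + 1)) t := by
      have := hasDerivAt_pow (k + 2) t
      refine this.congr_deriv ?_
      push_cast; ring_nf
    have h2 : HasDerivAt (fun u : ℝ => Real.log x - Real.log u) (-t⁻¹) t :=
      (Real.hasDerivAt_log ht0).const_sub _
    have h3 := (h1.mul h2).div_const ((k : ℝ) + 2)
    have h4 := (h1.div_const (((k : ℝ) + 2) ^ 2))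
    have := h3.add h4
    refine this.congr_deriv ?_
    field_simp
    ring
  have hint : IntervalIntegrable (fun u : ℝ => u ^ (k + 1) * (Real.log x - Real.log u))
      volume 0 x := (contAux2 k x).intervalIntegrable _ _
  have := intervalIntegral.integral_eq_sub_of_hasDeriv_right_of_le hx.le hcont
    (fun t ht => (hderiv t ht).hasDerivWithinAt) hint
  rw [this, hF]
  simp [hx.ne']

lemma hasSum_int (k p : ℕ) {x : ℝ} (hx0 : 0 < x) (hx1 : x < 1) :
    HasSum (fun j : ℕ => ((j + k).choose k : ℝ) * (x ^ (p + j + 2) / ((p : ℝ) + j + 2) ^ 2))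
      (∫ u in (0:ℝ)..x, u ^ (p + 1) * (Real.log x - Real.log u) / (1 - u) ^ (k + 1)) := by
  set μ := volume.restrict (Set.Ioc (0:ℝ) x) with hμ
  set F : ℕ → ℝ → ℝ := fun j u =>
    ((j + k).choose k : ℝ) * (u ^ (p + 1 + j) * (Real.log x - Real.log u)) with hFdef
  have hFcont : ∀ j, Continuous (F j) := fun j =>
    continuous_const.mul (by simpa [add_assoc, add_comm, add_left_comm] using contAux2 (p + j) x)
  have hFint : ∀ j, Integrable (F j) μ := fun j =>
    ((hFcont j).integrableOn_Ioc).integrable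
  -- value of each integral
  have hval : ∀ j, ∫ u, F j u ∂μ
      = ((j + k).choose k : ℝ) * (x ^ (p + j + 2) / ((p : ℝ) + j + 2) ^ 2) := by
    intro j
    have h1 : ∫ u, F j u ∂μ = ∫ u in (0:ℝ)..x, F j u := by
      rw [intervalIntegral.integral_of_le hx0.le]
    rw [h1, hFdef]
    simp only []
    rw [intervalIntegral.integral_const_mul]
    have := integral_pow_mul_log (p + j) hx0
    have e : p + j + 1 = p + 1 + j := by omega
    rw [e] at this
    rw [this]
    push_cast
    ring_nf
  -- nonnegativity on Ioc
  have hnonneg : ∀ j, ∀ u ∈ Set.Ioc (0:ℝ) x, 0 ≤ F j u := by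
    intro j u hu
    have : Real.log u ≤ Real.log x := Real.log_le_log hu.1 hu.2
    have h2 : (0:ℝ) ≤ u ^ (p + 1 + j) := pow_nonneg hu.1.le _
    exact mul_nonneg (Nat.cast_nonneg _) (mul_nonneg h2 (by linarith))
  -- norm integrals
  have hnorm : ∀ j, (∫ u, ‖F j u‖ ∂μ) = ∫ u, F j u ∂μ := by
    intro j
    refine integral_congr_ae ?_
    filter_upwards [ae_restrict_mem measurableSet_Ioc] with u hu
    exact Real.norm_of_nonneg (hnonneg j u hu)
  -- summability of the values
  have hsummable : Summable fun j : ℕ =>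
      ((j + k).choose k : ℝ) * (x ^ (p + j + 2) / ((p : ℝ) + j + 2) ^ 2) := by
    have hbig : Summable fun j : ℕ => (((j + k).choose k : ℝ) * x ^ j) * x ^ (p + 2) := by
      have hx : ‖x‖ < 1 := by rw [Real.norm_eq_abs, abs_of_pos hx0]; exact hx1
      exact (summable_choose_mul_geometric_of_norm_lt_one k hx).mul_right _
    refine Summable.of_nonneg_of_le (fun j => ?_) (fun j => ?_) hbig
    · exact mul_nonneg (Nat.cast_nonneg _)
        (div_nonneg (pow_nonneg hx0.le _) (sq_nonneg _))
    · have h1 : x ^ (p + j + 2) = x ^ j * x ^ (p + 2) := by rw [← pow_add]; ring_nf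
      rw [h1]
      have h2 : (1:ℝ) ≤ ((p : ℝ) + j + 2) ^ 2 := by
        have hp : (0:ℝ) ≤ p := Nat.cast_nonneg p
        have hj : (0:ℝ) ≤ j := Nat.cast_nonneg j
        nlinarith
      have h3 : x ^ j * x ^ (p + 2) / ((p : ℝ) + j + 2) ^ 2 ≤ x ^ j * x ^ (p + 2) := by
        apply div_le_self (by positivity) h2
      calc ((j + k).choose k : ℝ) * (x ^ j * x ^ (p + 2) / ((p : ℝ) + j + 2) ^ 2)
          ≤ ((j + k).choose k : ℝ) * (x ^ j * x ^ (p + 2)) := by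
            exact mul_le_mul_of_nonneg_left h3 (Nat.cast_nonneg _)
        _ = ((j + k).choose k : ℝ) * x ^ j * x ^ (p + 2) := by ring
  have hFsum : Summable fun j => ∫ u, ‖F j u‖ ∂μ := by
    apply Summable.congr hsummable
    intro j
    rw [hnorm j, hval j]
  have key := MeasureTheory.hasSum_integral_of_summable_integral_norm hFint hFsum
  -- identify the tsum with the closed form on Ioc
  have htsum : ∫ u, (∑' j, F j u) ∂μ
      = ∫ u in (0:ℝ)..x, u ^ (p + 1) * (Real.log x - Real.log u) / (1 - u) ^ (k + 1) := by
    rw [intervalIntegral.integral_of_le hx0.le]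
    refine setIntegral_congr_fun measurableSet_Ioc ?_
    intro u hu
    have hu1 : ‖u‖ < 1 := by
      rw [Real.norm_eq_abs, abs_of_pos hu.1]; linarith [hu.2]
    have hs := (hasSum_choose_mul_geometric_of_norm_lt_one k hu1).mul_left
      (u ^ (p + 1) * (Real.log x - Real.log u))
    have he : (fun j => u ^ (p + 1) * (Real.log x - Real.log u) *
        (((j + k).choose k : ℝ) * u ^ j)) = fun j => F j u := by
      funext j
      rw [hFdef]
      simp only []
      rw [pow_add]
      ring
    rw [he] at hs
    show (∑' j, F j u) = _
    rw [hs.tsum_eq]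
    field_simp
  rw [htsum] at key
  exact HasSum.congr_fun key (fun j => (hval j).symm)


lemma choose_id (m j : ℕ) :
    (((m + j + 2).choose (j + 2) : ℝ)) * ((j : ℝ) + 2) ^ 2
      = ((m : ℝ) + 1) * ((m + j + 3).choose (m + 2) : ℝ)
        + ((m : ℝ) + 1) ^ 2 * ((m + j + 2).choose (m + 2) : ℝ) := by
  have e1 : m + j + 2 - (j + 2) = m := by omega
  have e2 : m + j + 3 - (m + 2) = j + 1 := by omega
  have e3 : m + j + 2 - (m + 2) = j := by omega
  rw [Nat.cast_choose ℝ (by omega : j + 2 ≤ m + j + 2),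
      Nat.cast_choose ℝ (by omega : m + 2 ≤ m + j + 3),
      Nat.cast_choose ℝ (by omega : m + 2 ≤ m + j + 2), e1, e2, e3]
  have f1 : ((m + j + 3).factorial : ℝ) = ((m : ℝ) + j + 3) * ((m + j + 2).factorial : ℝ) := by
    rw [show m + j + 3 = (m + j + 2) + 1 from rfl, Nat.factorial_succ]; push_cast; ring
  have f2 : ((j + 2).factorial : ℝ) = ((j : ℝ) + 2) * ((j : ℝ) + 1) * (j.factorial : ℝ) := by
    rw [show j + 2 = (j + 1) + 1 from rfl, Nat.factorial_succ, Nat.factorial_succ]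
    push_cast; ring
  have f3 : ((m + 2).factorial : ℝ) = ((m : ℝ) + 2) * ((m : ℝ) + 1) * (m.factorial : ℝ) := by
    rw [show m + 2 = (m + 1) + 1 from rfl, Nat.factorial_succ, Nat.factorial_succ]
    push_cast; ring
  have f4 : ((j + 1).factorial : ℝ) = ((j : ℝ) + 1) * (j.factorial : ℝ) := by
    rw [Nat.factorial_succ]; push_cast; ring
  rw [f1, f2, f3, f4]
  have hj : (j.factorial : ℝ) ≠ 0 := Nat.cast_ne_zero.mpr (Nat.factorial_ne_zero j)
  have hm : (m.factorial : ℝ) ≠ 0 := Nat.cast_ne_zero.mpr (Nat.factorial_ne_zero m)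
  have hj2 : ((j : ℝ) + 2) ≠ 0 := by positivity
  have hj1 : ((j : ℝ) + 1) ≠ 0 := by positivity
  have hm2 : ((m : ℝ) + 2) ≠ 0 := by positivity
  have hm1 : ((m : ℝ) + 1) ≠ 0 := by positivity
  field_simp
  ring

theorem series_eq_integral_b (m : ℕ) (x : ℝ) (hx : x ∈ Set.Ioo (0 : ℝ) 1) :
    HasSum (fun ℓ : ℕ => ((m + ℓ).choose ℓ : ℝ) * x ^ ℓ * (ℓ : ℝ) ^ 2 / ((ℓ : ℝ) + m + 1) ^ 2)
      ((x ^ (m + 1))⁻¹ *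
        (((m : ℝ) + 1) *
            (∫ u in (0 : ℝ)..x, u ^ (m + 1) * (Real.log x - Real.log u) / (1 - u) ^ (m + 3)) +
          ((m : ℝ) + 1) ^ 2 *
            ∫ u in (0 : ℝ)..x, u ^ (m + 2) * (Real.log x - Real.log u) / (1 - u) ^ (m + 3))) := by
  obtain ⟨hx0, hx1⟩ := hx
  have hxm : x ^ (m + 1) ≠ 0 := pow_ne_zero _ hx0.ne'
  set I₁ := ∫ u in (0 : ℝ)..x, u ^ (m + 1) * (Real.log x - Real.log u) / (1 - u) ^ (m + 3)
    with hI₁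
  set I₂ := ∫ u in (0 : ℝ)..x, u ^ (m + 2) * (Real.log x - Real.log u) / (1 - u) ^ (m + 3)
    with hI₂
  have H1 : HasSum
      (fun j : ℕ => ((j + (m + 2)).choose (m + 2) : ℝ) * (x ^ (m + j + 2) / ((m : ℝ) + j + 2) ^ 2))
      I₁ := by
    have := hasSum_int (m + 2) m hx0 hx1
    simpa using this
  have H2 : HasSum
      (fun j : ℕ => ((j + (m + 2)).choose (m + 2) : ℝ) *
        (x ^ (m + 1 + j + 2) / (((m + 1 : ℕ) : ℝ) + j + 2) ^ 2))
      I₂ := by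
    have := hasSum_int (m + 2) (m + 1) hx0 hx1
    simpa using this
  set t₁ : ℕ → ℝ := fun j => (x ^ (m + 1))⁻¹ * (((m : ℝ) + 1) *
      (((j + (m + 2)).choose (m + 2) : ℝ) * (x ^ (m + j + 2) / ((m : ℝ) + j + 2) ^ 2))) with ht₁
  set t₂ : ℕ → ℝ := fun j => (x ^ (m + 1))⁻¹ * (((m : ℝ) + 1) ^ 2 *
      (((j + (m + 2)).choose (m + 2) : ℝ) *
        (x ^ (m + 1 + j + 2) / (((m + 1 : ℕ) : ℝ) + j + 2) ^ 2))) with ht₂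
  have A1 : HasSum t₁ ((x ^ (m + 1))⁻¹ * (((m : ℝ) + 1) * I₁)) :=
    (H1.mul_left _).mul_left _
  have A2 : HasSum t₂ ((x ^ (m + 1))⁻¹ * (((m : ℝ) + 1) ^ 2 * I₂)) :=
    (H2.mul_left _).mul_left _
  set G₁ : ℕ → ℝ := fun ℓ => if ℓ = 0 then 0 else t₁ (ℓ - 1) with hG₁
  set G₂ : ℕ → ℝ := fun ℓ => if ℓ < 2 then 0 else t₂ (ℓ - 2) with hG₂
  have B1 : HasSum G₁ ((x ^ (m + 1))⁻¹ * (((m : ℝ) + 1) * I₁)) := by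
    have e : (fun n : ℕ => G₁ (n + 1)) = t₁ := by
      funext n; simp [hG₁]
    have := (hasSum_nat_add_iff (f := G₁) 1).mp (by rw [e]; exact A1)
    simpa [hG₁] using this
  have B2 : HasSum G₂ ((x ^ (m + 1))⁻¹ * (((m : ℝ) + 1) ^ 2 * I₂)) := by
    have e : (fun n : ℕ => G₂ (n + 2)) = t₂ := by
      funext n; simp [hG₂]
    have := (hasSum_nat_add_iff (f := G₂) 2).mp (by rw [e]; exact A2)
    simpa [hG₂, Finset.sum_range_succ] using this
  have hsum := B1.add B2
  have hval : (x ^ (m + 1))⁻¹ * (((m : ℝ) + 1) * I₁ + ((m : ℝ) + 1) ^ 2 * I₂)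
      = (x ^ (m + 1))⁻¹ * (((m : ℝ) + 1) * I₁) + (x ^ (m + 1))⁻¹ * (((m : ℝ) + 1) ^ 2 * I₂) := by
    ring
  rw [hval]
  refine HasSum.congr_fun hsum fun ℓ => ?_
  match ℓ with
  | 0 => simp [hG₁, hG₂]
  | 1 =>
    have : G₁ 1 + G₂ 1 = t₁ 0 := by
      rw [hG₁, hG₂]; norm_num
    rw [this, ht₁]
    simp only [Nat.choose_one_right, Nat.zero_add, Nat.choose_self, Nat.cast_one]
    push_cast
    have hxp : x ^ (m + 0 + 2) = x ^ (m + 1) * x := by rw [← pow_succ]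
    rw [hxp]
    field_simp
    ring
  | (j + 2) =>
    have hg1 : G₁ (j + 2) = t₁ (j + 1) := by simp [hG₁]
    have hg2 : G₂ (j + 2) = t₂ j := by simp [hG₂]
    rw [hg1, hg2, ht₁, ht₂]
    simp only []
    have ec1 : j + 1 + (m + 2) = m + j + 3 := by omega
    have ec2 : j + (m + 2) = m + j + 2 := by omega
    have ec3 : m + (j + 1) + 2 = m + 1 + (j + 2) := by omega
    have ec4 : m + 1 + j + 2 = m + 1 + (j + 2) := by omega
    have ec5 : m + (j + 2) = m + j + 2 := by omega
    rw [ec1, ec2, ec3, ec4, ec5]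
    have hxp : x ^ (m + 1 + (j + 2)) = x ^ (m + 1) * x ^ (j + 2) := pow_add x _ _
    rw [hxp]
    have key := choose_id m j
    push_cast
    have hden : ((j : ℝ) + 2) + m + 1 = (m : ℝ) + j + 3 := by ring
    have hden2 : ((m : ℝ) + (j + 1) + 2) = (m : ℝ) + j + 3 := by ring
    have hden3 : ((m : ℝ) + 1 + j + 2) = (m : ℝ) + j + 3 := by ring
    rw [hden, hden2, hden3]
    linear_combination (x ^ (j + 2) / ((m : ℝ) + j + 3) ^ 2) * key -
      ((((m : ℝ) + 1) * ((m + j + 3).choose (m + 2) : ℝ) +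
          ((m : ℝ) + 1) ^ 2 * ((m + j + 2).choose (m + 2) : ℝ)) *
        (x ^ (j + 2) / ((m : ℝ) + j + 3) ^ 2)) * (inv_mul_cancel₀ hxm)
end

section
/- Let h, d be reals with 0 ≤ h < d ≤ 1 (so that h and 1-d are nonnegative with h + (1-d) < 1). Let V, W be random variables with joint pmf P(V = a, W = b) = h^a (1-d)^b (d - h) C(a+b, a) for a, b ∈ ℤ≥0 (i.e., (V,W) ~ Geom*(h, 1-d)). Then for every rational q = a/b ∈ [0,1) in lowest terms with a, b ∈ ℤ≥0, a < b, gcd(a,b) = 1, the estimator Ĥ = V/(1 + V + W) satisfies P(Ĥ = q) = (d - h) ∑_{i=1}^∞ C(bi - 1, ai) h^{ai} (1-d)^{(b-a)i - 1}. -/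
open MeasureTheory

lemma npmle_row_hasSum (x y : ℝ) (hy : 0 ≤ y) (c : ℝ) (n : ℕ) (hy1 : y < 1) :
    HasSum (fun m : ℕ => x ^ n * y ^ m * c * ((n + m).choose n : ℝ))
      (x ^ n * c * (1 / (1 - y) ^ (n + 1))) := by
  have hy' : ‖y‖ < 1 := by rwa [Real.norm_eq_abs, abs_of_nonneg hy]
  have H := (hasSum_choose_mul_geometric_of_norm_lt_one n hy').mul_left (x ^ n * c)
  convert H using 2 with m
  · rfl
  rw [Nat.add_comm n m]
  ring

lemma npmle_total_hasSum (x y : ℝ) (hx : 0 ≤ x) (hy : 0 ≤ y) (hxy : x + y < 1) :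
    HasSum (fun p : ℕ × ℕ => x ^ p.1 * y ^ p.2 * (1 - x - y) * ((p.1 + p.2).choose p.1 : ℝ)) 1 := by
  have hy1 : y < 1 := by linarith
  have h1y : (0:ℝ) < 1 - y := by linarith
  have hr0 : 0 ≤ x / (1 - y) := div_nonneg hx h1y.le
  have hr1 : x / (1 - y) < 1 := (div_lt_one h1y).mpr (by linarith)
  set c : ℝ := 1 - x - y with hc
  have hcpos : (0:ℝ) < c := by rw [hc]; linarith
  have hcol : HasSum (fun n : ℕ => x ^ n * c * (1 / (1 - y) ^ (n + 1))) 1 := by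
    have H := (hasSum_geometric_of_lt_one hr0 hr1).mul_left (c / (1 - y))
    have hval : c / (1 - y) * (1 - x / (1 - y))⁻¹ = 1 := by
      have e1 : 1 - x / (1 - y) = c / (1 - y) := by
        rw [eq_div_iff h1y.ne', sub_mul, div_mul_cancel₀ _ h1y.ne', hc]; ring
      rw [e1]
      exact mul_inv_cancel₀ (by positivity)
    rw [hval] at H
    convert H using 2 with n
    · rfl
    rw [div_pow, div_mul_div_comm, pow_succ]
    ring
  have hc0 : 0 ≤ c := hcpos.le
  have hnonneg : ∀ p : ℕ × ℕ, 0 ≤ x ^ p.1 * y ^ p.2 * c * ((p.1 + p.2).choose p.1 : ℝ) :=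
    fun p => by positivity
  have hrow : ∀ n : ℕ, HasSum (fun m : ℕ => x ^ n * y ^ m * c * ((n + m).choose n : ℝ))
      (x ^ n * c * (1 / (1 - y) ^ (n + 1))) := fun n => npmle_row_hasSum x y hy c n hy1
  have hsummable : Summable (fun p : ℕ × ℕ =>
      x ^ p.1 * y ^ p.2 * c * ((p.1 + p.2).choose p.1 : ℝ)) := by
    rw [summable_prod_of_nonneg hnonneg]
    refine ⟨fun n => (hrow n).summable, ?_⟩
    exact Summable.congr hcol.summable fun n => (hrow n).tsum_eq.symm
  have htot : ∑' p : ℕ × ℕ, x ^ p.1 * y ^ p.2 * c * ((p.1 + p.2).choose p.1 : ℝ) = 1 := by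
    rw [Summable.tsum_prod' hsummable (fun n => (hrow n).summable)]
    calc ∑' (n : ℕ) (m : ℕ), x ^ n * y ^ m * c * ((n + m).choose n : ℝ)
        = ∑' (n : ℕ), x ^ n * c * (1 / (1 - y) ^ (n + 1)) :=
          tsum_congr fun n => (hrow n).tsum_eq
      _ = 1 := hcol.tsum_eq
  have := hsummable.hasSum
  rwa [htot] at this

lemma npmle_arith1 (a b i : ℕ) (hab : a < b) :
    1 + a * (i + 1) + ((b - a) * (i + 1) - 1) = b * (i + 1) := by
  have hsub : (b - a) * (i + 1) = b * (i + 1) - a * (i + 1) := Nat.sub_mul b a (i + 1)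
  have hle : a * (i + 1) ≤ b * (i + 1) := Nat.mul_le_mul_right _ hab.le
  have hpos : 0 < (b - a) * (i + 1) := Nat.mul_pos (by omega) (i.succ_pos)
  omega

lemma npmle_arith2 (a b i : ℕ) (hab : a < b) :
    a * (i + 1) + ((b - a) * (i + 1) - 1) = b * (i + 1) - 1 := by
  have hsub : (b - a) * (i + 1) = b * (i + 1) - a * (i + 1) := Nat.sub_mul b a (i + 1)
  have hle : a * (i + 1) ≤ b * (i + 1) := Nat.mul_le_mul_right _ hab.le
  have hpos : 0 < (b - a) * (i + 1) := Nat.mul_pos (by omega) (i.succ_pos)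
  omega

/-- Exact pmf of the NPMLE `V/(1+V+W)` where `(V,W) ~ Geom*(h, 1-d)`. -/
theorem npmle_pmf {Ω : Type*} [MeasurableSpace Ω] (μ : Measure Ω) [IsProbabilityMeasure μ]
    (h d : ℝ) (hh : 0 ≤ h) (hhd : h < d) (hd : d ≤ 1)
    (V W : Ω → ℕ)
    (hpmf : ∀ a b : ℕ,
      μ {ω | V ω = a ∧ W ω = b} =
        ENNReal.ofReal (h ^ a * (1 - d) ^ b * (d - h) * ((a + b).choose a : ℝ)))
    (a b : ℕ) (hab : a < b) (hcop : Nat.gcd a b = 1) :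
    μ {ω | ((V ω : ℚ)) / (1 + V ω + W ω) = (a : ℚ) / b} =
      ENNReal.ofReal
        ((d - h) *
          ∑' i : ℕ,
            (((b * (i + 1) - 1).choose (a * (i + 1)) : ℝ) * h ^ (a * (i + 1)) *
              (1 - d) ^ ((b - a) * (i + 1) - 1))) := by
  have hb0 : 0 < b := lt_of_le_of_lt (Nat.zero_le a) hab
  have hy0 : (0:ℝ) ≤ 1 - d := by linarith
  have hc0 : (0:ℝ) < d - h := by linarith
  have hxy : h + (1 - d) < 1 := by linarith
  -- pmf values
  set g : ℕ × ℕ → ℝ :=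
    fun p => h ^ p.1 * (1 - d) ^ p.2 * (d - h) * ((p.1 + p.2).choose p.1 : ℝ) with hg
  have hgnn : ∀ p, 0 ≤ g p := fun p => by
    rw [hg]; positivity
  have htotR : HasSum g 1 := by
    have H := npmle_total_hasSum h (1 - d) hh hy0 hxy
    have e : (fun p : ℕ × ℕ =>
        h ^ p.1 * (1 - d) ^ p.2 * (1 - h - (1 - d)) * ((p.1 + p.2).choose p.1 : ℝ)) = g := by
      funext p; rw [hg]; ring
    rwa [e] at H
  set A : ℕ × ℕ → Set Ω := fun p => {ω | V ω = p.1 ∧ W ω = p.2} with hA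
  have hμA : ∀ p, μ (A p) = ENNReal.ofReal (g p) := fun p => hpmf p.1 p.2
  set f : ℕ → ℕ × ℕ := fun i => (a * (i + 1), (b - a) * (i + 1) - 1) with hfdef
  have hfinj : Function.Injective f := by
    intro i j hij
    have h2 : (b - a) * (i + 1) - 1 = (b - a) * (j + 1) - 1 := by
      have := congrArg Prod.snd hij
      simpa [hfdef] using this
    have e1 : 0 < (b - a) * (i + 1) := Nat.mul_pos (by omega) (Nat.succ_pos i)
    have e2 : 0 < (b - a) * (j + 1) := Nat.mul_pos (by omega) (Nat.succ_pos j)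
    have h3 : (b - a) * (i + 1) = (b - a) * (j + 1) := by omega
    have h4 := Nat.eq_of_mul_eq_mul_left (show 0 < b - a by omega) h3
    omega
  -- set equality
  have hset : {ω | ((V ω : ℚ)) / (1 + V ω + W ω) = (a : ℚ) / b} = ⋃ i, A (f i) := by
    ext ω
    simp only [Set.mem_setOf_eq, Set.mem_iUnion, hA, hfdef]
    have hbQ : ((b : ℚ)) ≠ 0 := Nat.cast_ne_zero.mpr hb0.ne'
    have hdQ : (1 + (V ω : ℚ) + (W ω : ℚ)) ≠ 0 := by positivity
    constructor
    · intro hq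
      rw [div_eq_div_iff hdQ hbQ] at hq
      have hq' : V ω * b = a * (1 + V ω + W ω) := by exact_mod_cast hq
      have hmul : a * (1 + V ω + W ω) = b * V ω := by
        calc a * (1 + V ω + W ω) = V ω * b := hq'.symm
          _ = b * V ω := Nat.mul_comm _ _
      have hdvd : b ∣ (1 + V ω + W ω) :=
        Nat.Coprime.dvd_of_dvd_mul_left (Nat.Coprime.symm hcop) ⟨V ω, hmul⟩
      obtain ⟨k, hk⟩ := hdvd
      have hk0 : k ≠ 0 := by rintro rfl; omega
      have hV : V ω = a * k := by
        apply Nat.eq_of_mul_eq_mul_right hb0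
        calc V ω * b = a * (1 + V ω + W ω) := hq'
          _ = a * (b * k) := by rw [hk]
          _ = a * k * b := by ring
      refine ⟨k - 1, ?_, ?_⟩
      · rw [Nat.sub_add_cancel (Nat.one_le_iff_ne_zero.mpr hk0)]; exact hV
      · rw [Nat.sub_add_cancel (Nat.one_le_iff_ne_zero.mpr hk0)]
        have hsub : (b - a) * k = b * k - a * k := Nat.sub_mul b a k
        have hle : a * k ≤ b * k := Nat.mul_le_mul_right k hab.le
        omega
    · rintro ⟨i, hV, hW⟩
      have hden : 1 + V ω + W ω = b * (i + 1) := by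
        rw [hV, hW]; exact npmle_arith1 a b i hab
      rw [div_eq_div_iff hdQ hbQ]
      have hnat : V ω * b = a * (1 + V ω + W ω) := by rw [hden, hV]; ring
      exact_mod_cast hnat
  -- total sum in ENNReal
  have hT : ∑' p : ℕ × ℕ, ENNReal.ofReal (g p) = 1 := by
    rw [← ENNReal.ofReal_tsum_of_nonneg hgnn htotR.summable, htotR.tsum_eq, ENNReal.ofReal_one]
  have hsplit : (∑' i : ℕ, ENNReal.ofReal (g (f i)))
      + ∑' p : ↥((Set.range f)ᶜ), ENNReal.ofReal (g ↑p) = 1 := by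
    have H := Summable.tsum_add_tsum_compl (s := Set.range f)
      (f := fun p => ENNReal.ofReal (g p)) ENNReal.summable ENNReal.summable
    rw [hT, tsum_range (fun p => ENNReal.ofReal (g p)) hfinj] at H
    exact H
  have hub : μ (⋃ i, A (f i)) ≤ ∑' i : ℕ, ENNReal.ofReal (g (f i)) :=
    le_trans (measure_iUnion_le _) (le_of_eq (tsum_congr fun i => hμA (f i)))
  have hub2 : μ (⋃ p : ↥((Set.range f)ᶜ), A ↑p)
      ≤ ∑' p : ↥((Set.range f)ᶜ), ENNReal.ofReal (g ↑p) :=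
    le_trans (measure_iUnion_le _) (le_of_eq (tsum_congr fun p => hμA ↑p))
  have hcover : (Set.univ : Set Ω) ⊆ (⋃ i, A (f i)) ∪ ⋃ p : ↥((Set.range f)ᶜ), A ↑p := by
    intro ω _
    by_cases hp : (V ω, W ω) ∈ Set.range f
    · obtain ⟨i, hi⟩ := hp
      exact Or.inl (Set.mem_iUnion.2 ⟨i, (congrArg Prod.fst hi).symm, (congrArg Prod.snd hi).symm⟩)
    · exact Or.inr (Set.mem_iUnion.2 ⟨⟨(V ω, W ω), hp⟩, rfl, rfl⟩)
  have hge : (1 : ENNReal) ≤ μ (⋃ i, A (f i)) + μ (⋃ p : ↥((Set.range f)ᶜ), A ↑p) := by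
    calc (1 : ENNReal) = μ Set.univ := measure_univ.symm
      _ ≤ μ ((⋃ i, A (f i)) ∪ ⋃ p : ↥((Set.range f)ᶜ), A ↑p) := measure_mono hcover
      _ ≤ _ := measure_union_le _ _
  have hScne : (∑' p : ↥((Set.range f)ᶜ), ENNReal.ofReal (g ↑p)) ≠ ⊤ := by
    have : (∑' p : ↥((Set.range f)ᶜ), ENNReal.ofReal (g ↑p)) ≤ 1 := by
      rw [← hsplit]; exact le_add_self
    exact (this.trans_lt ENNReal.one_lt_top).ne
  have hSrle : (∑' i : ℕ, ENNReal.ofReal (g (f i))) ≤ 1 := by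
    rw [← hsplit]; exact le_self_add
  have hmain : μ (⋃ i, A (f i)) = ∑' i : ℕ, ENNReal.ofReal (g (f i)) := by
    refine le_antisymm hub ?_
    have h1 : (∑' i : ℕ, ENNReal.ofReal (g (f i)))
        + ∑' p : ↥((Set.range f)ᶜ), ENNReal.ofReal (g ↑p)
        ≤ μ (⋃ i, A (f i)) + ∑' p : ↥((Set.range f)ᶜ), ENNReal.ofReal (g ↑p) := by
      rw [hsplit]
      exact hge.trans (add_le_add_right hub2 _)
    exact (ENNReal.add_le_add_iff_right hScne).mp h1
  rw [hset, hmain]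
  -- final conversion of the sum
  set t := fun i : ℕ => ((b * (i + 1) - 1).choose (a * (i + 1)) : ℝ) * h ^ (a * (i + 1)) *
      (1 - d) ^ ((b - a) * (i + 1) - 1) with ht
  have hgf : ∀ i, g (f i) = (d - h) * t i := by
    intro i
    simp only [hg, hfdef, ht]
    rw [npmle_arith2 a b i hab]
    ring
  have htnn : ∀ i, 0 ≤ (d - h) * t i := fun i => by rw [← hgf i]; exact hgnn (f i)
  have hne : (∑' i : ℕ, ENNReal.ofReal (g (f i))) ≠ ⊤ :=
    (hSrle.trans_lt ENNReal.one_lt_top).ne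
  have hsumm : Summable (fun i => (d - h) * t i) := by
    refine (ENNReal.summable_toReal hne).congr fun i => ?_
    rw [ENNReal.toReal_ofReal (hgnn (f i)), hgf i]
  calc (∑' i : ℕ, ENNReal.ofReal (g (f i)))
      = ∑' i : ℕ, ENNReal.ofReal ((d - h) * t i) := tsum_congr fun i => by rw [hgf i]
    _ = ENNReal.ofReal (∑' i : ℕ, (d - h) * t i) :=
        (ENNReal.ofReal_tsum_of_nonneg htnn hsumm).symm
    _ = ENNReal.ofReal ((d - h) * ∑' i : ℕ, t i) := by rw [tsum_mul_left]
end

section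
/- Let 0 ≤ h < d ≤ 1 and let (V, W) ~ Geom*(h, 1-d), i.e., P(V=a, W=b) = h^a(1-d)^b(d-h)C(a+b,a). Define Ĥ = V/(1 + V + W). Then for all x ∈ [0,1), P(Ĥ ≤ x) = (d - h) ∑_{m=0}^∞ (1-d)^m ∑_{ℓ=0}^{⌊(1+m)x/(1-x)⌋} C(m+ℓ, ℓ) h^ℓ. -/
open MeasureTheory

/-- Exact CDF of the NPMLE `V/(1+V+W)` where `(V,W) ~ Geom*(h, 1-d)`. -/
theorem npmle_cdf {Ω : Type*} [MeasurableSpace Ω] (μ : Measure Ω) [IsProbabilityMeasure μ]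
    (h d : ℝ) (hh : 0 ≤ h) (hhd : h < d) (hd : d ≤ 1)
    (V W : Ω → ℕ)
    (hpmf : ∀ a b : ℕ,
      μ {ω | V ω = a ∧ W ω = b} =
        ENNReal.ofReal (h ^ a * (1 - d) ^ b * (d - h) * ((a + b).choose a : ℝ))) :
    ∀ x : ℝ, x ∈ Set.Ico (0 : ℝ) 1 →
      μ {ω | ((V ω : ℝ)) / (1 + V ω + W ω) ≤ x} =
        ENNReal.ofReal
          ((d - h) *
            ∑' m : ℕ,
              (1 - d) ^ m *
                ∑ ℓ ∈ Finset.range (⌊(1 + (m : ℝ)) * x / (1 - x)⌋₊ + 1),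
                  ((m + ℓ).choose ℓ : ℝ) * h ^ ℓ) := by
  intro x hx
  obtain ⟨hx0, hx1⟩ := hx
  have h1x : (0:ℝ) < 1 - x := by linarith
  have hdh : (0:ℝ) < d - h := by linarith
  have hh1 : h < 1 := lt_of_lt_of_le hhd hd
  have h1h : (0:ℝ) < 1 - h := by linarith
  have hd0 : (0:ℝ) ≤ 1 - d := by linarith
  set N : ℕ → ℕ := fun m => ⌊(1 + (m : ℝ)) * x / (1 - x)⌋₊ with hN
  set q : ℕ × ℕ → ℝ := fun p =>
    h ^ p.2 * (1 - d) ^ p.1 * (d - h) * ((p.2 + p.1).choose p.2 : ℝ) with hqdef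
  have hq0 : ∀ p, 0 ≤ q p := by
    intro p
    have hc : (0:ℝ) ≤ ((p.2 + p.1).choose p.2 : ℝ) := Nat.cast_nonneg _
    simp only [hqdef]
    positivity
  set f : ℕ × ℕ → ENNReal := fun p => ENNReal.ofReal (q p) with hfdef
  set T : ℕ × ℕ → Set Ω := fun p => {ω | V ω = p.2 ∧ W ω = p.1} with hTdef
  have hμT : ∀ p, μ (T p) = f p := fun p => hpmf p.2 p.1
  -- membership characterization
  have hmem : ∀ ω : Ω, ((V ω : ℝ)) / (1 + (V ω : ℝ) + (W ω : ℝ)) ≤ x ↔ V ω ≤ N (W ω) := by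
    intro ω
    set a := V ω
    set b := W ω
    have hden : (0:ℝ) < 1 + (a:ℝ) + (b:ℝ) := by positivity
    have hnn : (0:ℝ) ≤ (1 + (b:ℝ)) * x / (1 - x) :=
      div_nonneg (mul_nonneg (by positivity) hx0) h1x.le
    have hfloor : a ≤ N b ↔ (a:ℝ) ≤ (1 + (b:ℝ)) * x / (1 - x) := by
      simp only [hN]
      exact Nat.le_floor_iff hnn
    rw [div_le_iff₀ hden, hfloor, le_div_iff₀ h1x]
    constructor <;> intro hle <;> nlinarith
  -- negative binomial series
  have key : ∀ m : ℕ, HasSum (fun ℓ : ℕ => (((ℓ + m).choose ℓ : ℝ)) * h ^ ℓ)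
      (1 / (1 - h) ^ (m + 1)) := by
    intro m
    have hnorm : ‖h‖ < 1 := by rwa [Real.norm_eq_abs, abs_of_nonneg hh]
    have hsum := hasSum_choose_mul_geometric_of_norm_lt_one (𝕜 := ℝ) m hnorm
    refine hsum.congr_fun fun ℓ => ?_
    rw [Nat.choose_symm_add]
  -- inner total sums
  have hinner : ∀ m : ℕ, ∑' ℓ : ℕ, f (m, ℓ)
      = ENNReal.ofReal ((1 - d) ^ m * (d - h) * (1 / (1 - h) ^ (m + 1))) := by
    intro m
    have hs : HasSum (fun ℓ : ℕ => q (m, ℓ))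
        ((1 - d) ^ m * (d - h) * (1 / (1 - h) ^ (m + 1))) := by
      have hsum := (key m).mul_left ((1 - d) ^ m * (d - h))
      refine hsum.congr_fun fun ℓ => ?_
      simp only [hqdef]
      ring
    rw [← hs.tsum_eq]
    exact (ENNReal.ofReal_tsum_of_nonneg (fun ℓ => hq0 (m, ℓ)) hs.summable).symm
  -- total sum is 1
  have houter : HasSum (fun m : ℕ => (1 - d) ^ m * (d - h) * (1 / (1 - h) ^ (m + 1))) 1 := by
    have hr0 : (0:ℝ) ≤ (1 - d) / (1 - h) := div_nonneg hd0 h1h.le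
    have hr1 : (1 - d) / (1 - h) < 1 := (div_lt_one h1h).mpr (by linarith)
    have hgeo := (hasSum_geometric_of_lt_one hr0 hr1).mul_left ((d - h) / (1 - h))
    have hsum : HasSum (fun m : ℕ => (1 - d) ^ m * (d - h) * (1 / (1 - h) ^ (m + 1)))
        ((d - h) / (1 - h) * (1 - (1 - d) / (1 - h))⁻¹) := by
      refine hgeo.congr_fun fun m => ?_
      rw [div_pow]
      field_simp
      ring
    convert hsum using 1
    have heq : (1:ℝ) - (1 - d) / (1 - h) = (d - h) / (1 - h) := by
      field_simp
      ring
    rw [heq, mul_inv_cancel₀ (ne_of_gt (div_pos hdh h1h))]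
  have htotal : ∑' p, f p = 1 := by
    rw [ENNReal.tsum_prod']
    calc ∑' m : ℕ, ∑' ℓ : ℕ, f (m, ℓ)
        = ∑' m : ℕ, ENNReal.ofReal ((1 - d) ^ m * (d - h) * (1 / (1 - h) ^ (m + 1))) :=
          tsum_congr hinner
      _ = ENNReal.ofReal (∑' m : ℕ, (1 - d) ^ m * (d - h) * (1 / (1 - h) ^ (m + 1))) := by
          refine (ENNReal.ofReal_tsum_of_nonneg (fun m => ?_) houter.summable).symm
          positivity
      _ = 1 := by rw [houter.tsum_eq, ENNReal.ofReal_one]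
  -- index set
  set I : Set (ℕ × ℕ) := {p | p.2 ≤ N p.1} with hIdef
  set Sm : ℕ → ℝ := fun m =>
    ∑ ℓ ∈ Finset.range (N m + 1), ((m + ℓ).choose ℓ : ℝ) * h ^ ℓ with hSmdef
  have hSm0 : ∀ m, 0 ≤ Sm m := by
    intro m
    refine Finset.sum_nonneg fun ℓ _ => ?_
    positivity
  -- the key computation of ∑' over I
  have hrow : ∀ m : ℕ, ∑' ℓ : ℕ, I.indicator f (m, ℓ)
      = ENNReal.ofReal ((d - h) * ((1 - d) ^ m * Sm m)) := by
    intro m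
    have hstep : ∑' ℓ : ℕ, I.indicator f (m, ℓ)
        = ∑ ℓ ∈ Finset.range (N m + 1), f (m, ℓ) := by
      rw [tsum_eq_sum (s := Finset.range (N m + 1)) ?_]
      · refine Finset.sum_congr rfl fun ℓ hℓ => Set.indicator_of_mem ?_ f
        simp only [hIdef, Set.mem_setOf_eq]
        have := Finset.mem_range.mp hℓ
        omega
      · intro ℓ hℓ
        refine Set.indicator_of_notMem ?_ f
        simp only [hIdef, Set.mem_setOf_eq]
        have := Finset.mem_range.not.mp hℓ
        omega
    rw [hstep, hfdef]
    rw [← ENNReal.ofReal_sum_of_nonneg (fun ℓ _ => hq0 (m, ℓ))]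
    congr 1
    rw [hSmdef]
    simp only []
    rw [Finset.mul_sum, Finset.mul_sum]
    refine Finset.sum_congr rfl fun ℓ _ => ?_
    simp only [hqdef]
    rw [Nat.add_comm m ℓ]
    ring
  have hA : ∑' p, I.indicator f p =
      ENNReal.ofReal ((d - h) * ∑' m : ℕ, (1 - d) ^ m * Sm m) := by
    rw [ENNReal.tsum_prod']
    rw [tsum_congr hrow]
    have hfin : ∑' m : ℕ, ENNReal.ofReal ((d - h) * ((1 - d) ^ m * Sm m)) ≠ ⊤ := by
      have heq2 : ∑' m : ℕ, ENNReal.ofReal ((d - h) * ((1 - d) ^ m * Sm m))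
          = ∑' p, I.indicator f p := by
        rw [ENNReal.tsum_prod']
        exact (tsum_congr hrow).symm
      have hle1 : ∑' p, I.indicator f p ≤ 1 :=
        htotal ▸ ENNReal.tsum_le_tsum (fun p => Set.indicator_le_self I f p)
      rw [heq2]
      exact ne_top_of_le_ne_top ENNReal.one_ne_top hle1
    have hGsum : Summable (fun m : ℕ => (d - h) * ((1 - d) ^ m * Sm m)) := by
      have hsum := ENNReal.summable_toReal hfin
      refine hsum.congr fun m => ?_
      rw [ENNReal.toReal_ofReal]
      have := hSm0 m
      positivity
    have husum : Summable (fun m : ℕ => (1 - d) ^ m * Sm m) := by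
      have hsum := hGsum.div_const (d - h)
      refine hsum.congr fun m => ?_
      field_simp
    calc ∑' m : ℕ, ENNReal.ofReal ((d - h) * ((1 - d) ^ m * Sm m))
        = ∑' m : ℕ, ENNReal.ofReal (d - h) * ENNReal.ofReal ((1 - d) ^ m * Sm m) :=
          tsum_congr fun m => ENNReal.ofReal_mul hdh.le
      _ = ENNReal.ofReal (d - h) * ∑' m : ℕ, ENNReal.ofReal ((1 - d) ^ m * Sm m) :=
          ENNReal.tsum_mul_left
      _ = ENNReal.ofReal (d - h) * ENNReal.ofReal (∑' m : ℕ, (1 - d) ^ m * Sm m) := by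
          rw [ENNReal.ofReal_tsum_of_nonneg (fun m => by have := hSm0 m; positivity) husum]
      _ = ENNReal.ofReal ((d - h) * ∑' m : ℕ, (1 - d) ^ m * Sm m) :=
          (ENNReal.ofReal_mul hdh.le).symm
  -- set identities
  have hScov : {ω | ((V ω : ℝ)) / (1 + (V ω : ℝ) + (W ω : ℝ)) ≤ x} = ⋃ p : I, T ↑p := by
    ext ω
    simp only [Set.mem_setOf_eq, Set.mem_iUnion, hmem, hTdef]
    constructor
    · intro hle
      exact ⟨⟨(W ω, V ω), hle⟩, rfl, rfl⟩
    · rintro ⟨⟨⟨m, ℓ⟩, hp⟩, h1, h2⟩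
      simp only [hIdef, Set.mem_setOf_eq] at hp
      rw [h1, h2]; exact hp
  have hSccov : {ω | ((V ω : ℝ)) / (1 + (V ω : ℝ) + (W ω : ℝ)) ≤ x}ᶜ = ⋃ p : ↥Iᶜ, T ↑p := by
    ext ω
    simp only [Set.mem_compl_iff, Set.mem_setOf_eq, Set.mem_iUnion, hmem, hTdef]
    constructor
    · intro hle
      exact ⟨⟨(W ω, V ω), hle⟩, rfl, rfl⟩
    · rintro ⟨⟨⟨m, ℓ⟩, hp⟩, h1, h2⟩
      simp only [hIdef, Set.mem_compl_iff, Set.mem_setOf_eq] at hp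
      rw [h1, h2]; exact hp
  set S : Set Ω := {ω | ((V ω : ℝ)) / (1 + (V ω : ℝ) + (W ω : ℝ)) ≤ x} with hSdef
  -- upper bounds
  have h1le : μ S ≤ ∑' p, I.indicator f p := by
    rw [hScov, ← tsum_subtype I f]
    refine (measure_iUnion_le _).trans ?_
    exact le_of_eq (tsum_congr fun p => hμT p)
  have h2le : μ Sᶜ ≤ ∑' p, Iᶜ.indicator f p := by
    rw [hSccov, ← tsum_subtype Iᶜ f]
    refine (measure_iUnion_le _).trans ?_
    exact le_of_eq (tsum_congr fun p => hμT p)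
  have hAB : (∑' p, I.indicator f p) + (∑' p, Iᶜ.indicator f p) = 1 := by
    rw [← htotal, ← ENNReal.tsum_add]
    refine tsum_congr fun p => ?_
    have hind := congrFun (Set.indicator_self_add_compl I f) p
    simpa using hind
  have h3 : (1 : ENNReal) ≤ μ S + μ Sᶜ := by
    calc (1 : ENNReal) = μ Set.univ := (measure_univ (μ := μ)).symm
      _ = μ (S ∪ Sᶜ) := by rw [Set.union_compl_self]
      _ ≤ μ S + μ Sᶜ := measure_union_le _ _
  have hBfin : (∑' p, Iᶜ.indicator f p) ≠ ⊤ := by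
    intro htop
    rw [htop] at hAB
    simp at hAB
  have hge : ∑' p, I.indicator f p ≤ μ S := by
    have step : (∑' p, I.indicator f p) + (∑' p, Iᶜ.indicator f p)
        ≤ μ S + (∑' p, Iᶜ.indicator f p) := by
      rw [hAB]
      exact h3.trans (add_le_add le_rfl h2le)
    exact (ENNReal.add_le_add_iff_right hBfin).mp step
  have hfinal : μ S = ∑' p, I.indicator f p := le_antisymm h1le hge
  rw [hfinal, hA]
end

section
/- Let 0 ≤ h < d ≤ 1 and (V, W) ~ Geom*(h, 1-d). Then the expectation of Ĥ = V/(1+V+W) equals (d-h)·h/(1+h-d)² · log(d-h) + h/(1+h-d), where log is the natural logarithm (with the convention that the first term is 0 when h = 0). -/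
open MeasureTheory

open Finset in
lemma hasSum_antidiag {f : ℕ × ℕ → ℝ} (hf : ∀ p, 0 ≤ f p) {g : ℕ → ℝ}
    (hg : ∀ n : ℕ, ∑ k ∈ range (n + 1), f (k, n - k) = g n) {a : ℝ}
    (ha : HasSum g a) : HasSum f a := by
  rw [← (Finset.HasAntidiagonal.sigmaAntidiagonalEquivProd (A := ℕ)).hasSum_iff]
  have hfib : ∀ n : ℕ, HasSum
      (fun c : antidiagonal n =>
        (f ∘ Finset.HasAntidiagonal.sigmaAntidiagonalEquivProd) ⟨n, c⟩) (g n) := by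
    intro n
    have h1 := hasSum_fintype
      (fun c : antidiagonal n => (f ∘ Finset.HasAntidiagonal.sigmaAntidiagonalEquivProd) ⟨n, c⟩)
    have h2 : ∑ c : antidiagonal n,
        (f ∘ Finset.HasAntidiagonal.sigmaAntidiagonalEquivProd) ⟨n, c⟩ = g n := by
      rw [← hg n, ← Finset.Nat.sum_antidiagonal_eq_sum_range_succ_mk f]
      rw [← Finset.sum_attach (antidiagonal n) f]
      rfl
    rwa [h2] at h1
  have hsum : Summable (f ∘ Finset.HasAntidiagonal.sigmaAntidiagonalEquivProd) := by
    refine (summable_sigma_of_nonneg (fun x => hf _)).mpr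
      ⟨fun n => (hfib n).summable, ?_⟩
    exact ha.summable.congr fun n => ((hfib n).tsum_eq).symm
  exact HasSum.sigma_of_hasSum ha hfib hsum

lemma sum_choose_mul (x y : ℝ) (n : ℕ) :
    ∑ k ∈ Finset.range (n + 1), (k : ℝ) * (x ^ k * y ^ (n - k) * ((n.choose k) : ℝ))
      = n * x * (x + y) ^ (n - 1) := by
  cases n with
  | zero => simp
  | succ m =>
    rw [Finset.sum_range_succ']
    have key : ∀ i : ℕ, ((i + 1 : ℕ) : ℝ) *
        (x ^ (i + 1) * y ^ (m + 1 - (i + 1)) * (((m + 1).choose (i + 1)) : ℝ))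
        = ((m : ℝ) + 1) * x * (x ^ i * y ^ (m - i) * ((m.choose i) : ℝ)) := by
      intro i
      have hc : (m + 1) * m.choose i = (m + 1).choose (i + 1) * (i + 1) :=
        Nat.add_one_mul_choose_eq m i
      have hc' : ((m : ℝ) + 1) * (m.choose i : ℝ)
          = ((m + 1).choose (i + 1) : ℝ) * ((i : ℝ) + 1) := by exact_mod_cast hc
      rw [Nat.succ_sub_succ]
      push_cast
      linear_combination (-x ^ (i + 1) * y ^ (m - i)) * hc'
    rw [Finset.sum_congr rfl fun i _ => key i]
    rw [← Finset.mul_sum, ← add_pow]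
    push_cast
    ring

lemma outer_hasSum (x : ℝ) {s : ℝ} (h0 : 0 < s) (h1 : s < 1) :
    HasSum (fun n : ℕ => (1 - s) * x * ((n : ℝ) + 1) * s ^ n / ((n : ℝ) + 2))
      ((1 - s) * x / s ^ 2 * Real.log (1 - s) + x / s) := by
  have hs0 : s ≠ 0 := h0.ne'
  have hs1 : (1 : ℝ) - s ≠ 0 := by linarith
  have hgeo : HasSum (fun n : ℕ => (1 - s) * x * s ^ n) ((1 - s) * x * (1 - s)⁻¹) :=
    (hasSum_geometric_of_lt_one h0.le h1).mul_left _
  have hlog := Real.hasSum_pow_div_log_of_abs_lt_one (x := s) (by rw [abs_of_pos h0]; exact h1)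
  have hshift : HasSum (fun n : ℕ => s ^ (n + 1 + 1) / ((n : ℝ) + 1 + 1))
      (-Real.log (1 - s) - s) := by
    have := (hasSum_nat_add_iff (f := fun n : ℕ => s ^ (n + 1) / ((n : ℝ) + 1)) 1
      (g := -Real.log (1 - s) - s)).mpr ?_
    · convert this using 2 with n
      rfl
      push_cast
      ring
    · convert hlog using 1
      rfl
      simp [Finset.sum_range_one]
  have hmul := hshift.mul_left ((1 - s) * x / s ^ 2)
  have := hgeo.sub hmul
  convert this using 1
  rfl
  · funext n
    have : s ^ (n + 1 + 1) = s ^ n * s ^ 2 := by ring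
    rw [this]
    field_simp
    ring
  · field_simp
    ring

lemma hasSum_P (h d : ℝ) (hh : 0 ≤ h) (hhd : h < d) (hd : d ≤ 1) :
    HasSum (fun p : ℕ × ℕ =>
      h ^ p.1 * (1 - d) ^ p.2 * (d - h) * (((p.1 + p.2).choose p.1 : ℕ) : ℝ)) 1 := by
  have hq : (0 : ℝ) ≤ 1 - d := by linarith
  have hr : (0 : ℝ) < d - h := by linarith
  apply hasSum_antidiag (g := fun n : ℕ => (d - h) * (1 + h - d) ^ n)
  · intro p
    positivity
  · intro n
    have : ∀ k ∈ Finset.range (n + 1),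
        h ^ k * (1 - d) ^ (n - k) * (d - h) * (((k + (n - k)).choose k : ℕ) : ℝ)
        = (d - h) * (h ^ k * (1 - d) ^ (n - k) * ((n.choose k : ℕ) : ℝ)) := by
      intro k hk
      have hk' : k ≤ n := Nat.lt_succ_iff.mp (Finset.mem_range.mp hk)
      rw [Nat.add_sub_cancel' hk']
      ring
    rw [Finset.sum_congr rfl this, ← Finset.mul_sum, ← add_pow]
    rw [show h + (1 - d) = 1 + h - d by ring]
  · have h0 : (0 : ℝ) ≤ 1 + h - d := by linarith
    have h1 : 1 + h - d < 1 := by linarith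
    have := (hasSum_geometric_of_lt_one h0 h1).mul_left (d - h)
    convert this using 1
    rfl
    rw [show (1 : ℝ) - (1 + h - d) = d - h by ring]
    rw [mul_inv_cancel₀ hr.ne']

lemma hasSum_F (h d : ℝ) (hh : 0 ≤ h) (hhd : h < d) (hd : d ≤ 1) :
    HasSum (fun p : ℕ × ℕ => ((p.1 : ℝ) / (1 + p.1 + p.2)) *
        (h ^ p.1 * (1 - d) ^ p.2 * (d - h) * (((p.1 + p.2).choose p.1 : ℕ) : ℝ)))
      ((d - h) * h / (1 + h - d) ^ 2 * Real.log (d - h) + h / (1 + h - d)) := by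
  have hq : (0 : ℝ) ≤ 1 - d := by linarith
  have hr : (0 : ℝ) < d - h := by linarith
  rcases eq_or_lt_of_le hh with h0 | h0
  · -- h = 0
    have hfz : (fun p : ℕ × ℕ => ((p.1 : ℝ) / (1 + p.1 + p.2)) *
        (h ^ p.1 * (1 - d) ^ p.2 * (d - h) * (((p.1 + p.2).choose p.1 : ℕ) : ℝ)))
        = fun _ => (0 : ℝ) := by
      funext p
      rcases Nat.eq_zero_or_pos p.1 with h1 | h1
      · rw [h1]; simp
      · rw [← h0, zero_pow h1.ne']; ring
    rw [hfz, ← h0]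
    simpa using hasSum_zero
  · have hs0 : (0 : ℝ) < 1 + h - d := by linarith
    have hs1 : 1 + h - d < 1 := by linarith
    apply hasSum_antidiag
      (g := fun n : ℕ => (d - h) * ((n : ℝ) * h * (1 + h - d) ^ (n - 1)) / ((n : ℝ) + 1))
    · intro p
      have : (0:ℝ) < 1 + p.1 + p.2 := by positivity
      have h1 : (0:ℝ) ≤ (p.1 : ℝ) / (1 + p.1 + p.2) := by positivity
      positivity
    · intro n
      have hstep : ∀ k ∈ Finset.range (n + 1),
          ((k : ℝ) / (1 + k + ((n - k : ℕ) : ℝ))) *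
            (h ^ k * (1 - d) ^ (n - k) * (d - h) * (((k + (n - k)).choose k : ℕ) : ℝ))
          = (d - h) / ((n : ℝ) + 1) *
            ((k : ℝ) * (h ^ k * (1 - d) ^ (n - k) * ((n.choose k : ℕ) : ℝ))) := by
        intro k hk
        have hk' : k ≤ n := Nat.lt_succ_iff.mp (Finset.mem_range.mp hk)
        rw [Nat.add_sub_cancel' hk', Nat.cast_sub hk']
        rw [show (1 : ℝ) + k + ((n : ℝ) - k) = (n : ℝ) + 1 by ring]
        ring
      rw [Finset.sum_congr rfl hstep, ← Finset.mul_sum, sum_choose_mul]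
      rw [show h + (1 - d) = 1 + h - d by ring]
      ring
    · have O := outer_hasSum h hs0 hs1
      rw [show (1 : ℝ) - (1 + h - d) = d - h by ring] at O
      have O' := (hasSum_nat_add_iff (f := fun n : ℕ =>
        (d - h) * ((n : ℝ) * h * (1 + h - d) ^ (n - 1)) / ((n : ℝ) + 1)) 1
        (g := (d - h) * h / (1 + h - d) ^ 2 * Real.log (d - h) + h / (1 + h - d))).mp ?_
      · simpa using O'
      · convert O using 2 with n
        rfl
        push_cast [Nat.add_sub_cancel]
        ring


/-- Expectation of the NPMLE `V/(1+V+W)` where `(V,W) ~ Geom*(h, 1-d)`. -/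
theorem npmle_expectation {Ω : Type*} [MeasurableSpace Ω] (μ : Measure Ω)
    [IsProbabilityMeasure μ] (h d : ℝ) (hh : 0 ≤ h) (hhd : h < d) (hd : d ≤ 1)
    (V W : Ω → ℕ)
    (hpmf : ∀ a b : ℕ,
      μ {ω | V ω = a ∧ W ω = b} =
        ENNReal.ofReal (h ^ a * (1 - d) ^ b * (d - h) * ((a + b).choose a : ℝ))) :
    ∫ ω, ((V ω : ℝ)) / (1 + V ω + W ω) ∂μ =
      (d - h) * h / (1 + h - d) ^ 2 * Real.log (d - h) + h / (1 + h - d) := by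
  classical
  set X : Ω → ℕ × ℕ := fun ω => (V ω, W ω) with hX
  set P : ℕ × ℕ → ℝ :=
    fun p => h ^ p.1 * (1 - d) ^ p.2 * (d - h) * (((p.1 + p.2).choose p.1 : ℕ) : ℝ) with hPdef
  have hPnn : ∀ p, 0 ≤ P p := by
    intro p
    have hq : (0:ℝ) ≤ 1 - d := by linarith
    have hr : (0:ℝ) ≤ d - h := by linarith
    have := (p.1 + p.2).choose p.1
    positivity
  set S : ℕ × ℕ → Set Ω := fun p => X ⁻¹' {p} with hSdef
  have hμS : ∀ p, μ (S p) = ENNReal.ofReal (P p) := by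
    intro p
    have : S p = {ω | V ω = p.1 ∧ W ω = p.2} := by
      ext ω; simp [hSdef, hX, Prod.ext_iff]
    rw [this]
    exact hpmf p.1 p.2
  have hPsum : HasSum P 1 := hasSum_P h d hh hhd hd
  have htot : ∑' p : ℕ × ℕ, μ (S p) = 1 := by
    simp_rw [hμS]
    rw [← ENNReal.ofReal_tsum_of_nonneg hPnn hPsum.summable, hPsum.tsum_eq,
      ENNReal.ofReal_one]
  have hmeasAll : ∀ s : Set (ℕ × ℕ), MeasurableSet s := by
    intro s
    have : s = ⋃ p ∈ s, {p} := by simp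
    rw [this]
    exact MeasurableSet.biUnion s.to_countable fun p _ => measurableSet_singleton p
  have hnm : ∀ p, NullMeasurableSet (S p) μ := by
    intro p
    set T := toMeasurable μ (S p) with hT
    set T' := toMeasurable μ (S p)ᶜ with hT'
    have hkey : μ (S p) + μ ((S p)ᶜ) ≤ 1 := by
      have h1 : μ ((S p)ᶜ) ≤ ∑' p', if p' = p then 0 else μ (S p') := by
        have hsub : (S p)ᶜ ⊆ ⋃ p', (if p' = p then (∅ : Set Ω) else S p') := by
          intro ω hω
          have hne : X ω ≠ p := hω
          refine Set.mem_iUnion.mpr ⟨X ω, ?_⟩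
          rw [if_neg hne]
          exact rfl
        refine le_trans (measure_mono hsub) (le_trans (measure_iUnion_le _) ?_)
        refine ENNReal.tsum_le_tsum fun p' => ?_
        by_cases hp' : p' = p <;> simp [hp']
      calc μ (S p) + μ ((S p)ᶜ)
          ≤ μ (S p) + ∑' p', if p' = p then 0 else μ (S p') := add_le_add_right h1 _
        _ = ∑' p', μ (S p') := by
            rw [ENNReal.tsum_eq_add_tsum_ite (f := fun p' => μ (S p')) p]
            congr 1
            exact tsum_congr fun p' => by by_cases hp' : p' = p <;> simp [hp']
        _ = 1 := htot
    have hTT : μ (T ∩ T') = 0 := by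
      have hunion : T ∪ T' = Set.univ := by
        apply Set.eq_univ_of_univ_subset
        intro ω _
        by_cases hω : ω ∈ S p
        · exact Or.inl (subset_toMeasurable μ _ hω)
        · exact Or.inr (subset_toMeasurable μ _ hω)
      have hiu := measure_union_add_inter (μ := μ) T (measurableSet_toMeasurable μ ((S p)ᶜ))
      rw [hunion, measure_univ] at hiu
      have hle : (1:ENNReal) + μ (T ∩ T') ≤ 1 + 0 := by
        rw [hiu, add_zero, hT, measure_toMeasurable, measure_toMeasurable]
        exact hkey
      have h2 := (ENNReal.add_le_add_iff_left (by simp : (1:ENNReal) ≠ ⊤)).mp hle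
      exact le_antisymm (by simpa using h2) zero_le
    have hae : S p =ᵐ[μ] T := by
      rw [ae_eq_set]
      constructor
      · have he : S p \ T = ∅ := Set.diff_eq_empty.mpr (subset_toMeasurable μ _)
        simp [he]
      · refine measure_mono_null ?_ hTT
        intro ω hω
        exact ⟨hω.1, subset_toMeasurable μ _ hω.2⟩
    exact (measurableSet_toMeasurable μ (S p)).nullMeasurableSet.congr hae.symm
  have hXnm : NullMeasurable X μ := by
    intro t ht
    have he : X ⁻¹' t = ⋃ p ∈ t, S p := by
      ext ω
      simp only [Set.mem_preimage, Set.mem_iUnion, hSdef, Set.mem_singleton_iff]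
      exact ⟨fun hx => ⟨X ω, hx, rfl⟩, fun ⟨p, hp, he⟩ => he ▸ hp⟩
    rw [he]
    exact NullMeasurableSet.biUnion t.to_countable fun p _ => hnm p
  have hXae : AEMeasurable X μ := hXnm.aemeasurable
  set G : ℕ × ℕ → ℝ := fun p => (p.1 : ℝ) / (1 + p.1 + p.2) with hGdef
  have hGnn : ∀ p : ℕ × ℕ, 0 ≤ G p := by
    intro p
    have h1 : (0:ℝ) < 1 + p.1 + p.2 := by positivity
    positivity
  have hGmeas : Measurable G := fun s _ => hmeasAll _
  have hfae : AEStronglyMeasurable (fun ω => G (X ω)) μ :=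
    (hGmeas.comp_aemeasurable hXae).aestronglyMeasurable
  have hFsum : HasSum (fun p : ℕ × ℕ => G p * P p)
      ((d - h) * h / (1 + h - d) ^ 2 * Real.log (d - h) + h / (1 + h - d)) :=
    hasSum_F h d hh hhd hd
  have h1 : ∫ ω, G (X ω) ∂μ = (∫⁻ ω, ENNReal.ofReal (G (X ω)) ∂μ).toReal :=
    integral_eq_lintegral_of_nonneg_ae (Filter.Eventually.of_forall fun ω => hGnn _) hfae
  have h2 : ∫⁻ ω, ENNReal.ofReal (G (X ω)) ∂μ
      = ∑' p : ℕ × ℕ, ENNReal.ofReal (G p) * μ (S p) := by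
    rw [← lintegral_map' (f := fun p => ENNReal.ofReal (G p))
      (measurable_of_countable _).aemeasurable hXae]
    rw [lintegral_countable']
    refine tsum_congr fun p => ?_
    rw [Measure.map_apply_of_aemeasurable hXae (hmeasAll {p})]
  have h3 : ∑' p : ℕ × ℕ, ENNReal.ofReal (G p) * μ (S p)
      = ENNReal.ofReal (∑' p : ℕ × ℕ, G p * P p) := by
    rw [ENNReal.ofReal_tsum_of_nonneg (fun p => mul_nonneg (hGnn p) (hPnn p)) hFsum.summable]
    refine tsum_congr fun p => ?_
    rw [hμS, ENNReal.ofReal_mul (hGnn p)]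
  have hmain : ∫ ω, G (X ω) ∂μ
      = (d - h) * h / (1 + h - d) ^ 2 * Real.log (d - h) + h / (1 + h - d) := by
    rw [h1, h2, h3, ENNReal.toReal_ofReal
      (tsum_nonneg fun p => mul_nonneg (hGnn p) (hPnn p)), hFsum.tsum_eq]
  exact hmain
end

section
/- For p ∈ (0,1), define for each k ∈ ℕ the quantity E_k(p) = (k+1)(1-p)^{k+1} p log(1-p)/(1-(1-p)^{k+1})² + p/(1-(1-p)^{k+1}). Then 0 < E_k(p) < p for all k (the estimator is negatively biased) and E_k(p) → p as k → ∞. -/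
open Filter

/-- Negative bias and asymptotic unbiasedness of the geometric-case NPMLE expectation. -/
theorem geometric_bias (p : ℝ) (hp : p ∈ Set.Ioo (0 : ℝ) 1) :
    (∀ k : ℕ,
        0 < ((k : ℝ) + 1) * (1 - p) ^ (k + 1) * p * Real.log (1 - p) /
              (1 - (1 - p) ^ (k + 1)) ^ 2 +
            p / (1 - (1 - p) ^ (k + 1)) ∧
        ((k : ℝ) + 1) * (1 - p) ^ (k + 1) * p * Real.log (1 - p) /
              (1 - (1 - p) ^ (k + 1)) ^ 2 +
            p / (1 - (1 - p) ^ (k + 1)) < p) ∧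
      Tendsto
        (fun k : ℕ =>
          ((k : ℝ) + 1) * (1 - p) ^ (k + 1) * p * Real.log (1 - p) /
              (1 - (1 - p) ^ (k + 1)) ^ 2 +
            p / (1 - (1 - p) ^ (k + 1)))
        atTop (nhds p) := by
  obtain ⟨hp0, hp1⟩ := hp
  set q : ℝ := 1 - p with hq
  have hq0 : 0 < q := by simp [hq]; linarith
  have hq1 : q < 1 := by simp [hq]; linarith
  constructor
  · intro k
    set x : ℝ := q ^ (k + 1) with hx
    have hx0 : 0 < x := pow_pos hq0 _
    have hx1 : x < 1 := pow_lt_one₀ hq0.le hq1 (by omega)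
    have h1x : 0 < 1 - x := by linarith
    have hlog : ((k : ℝ) + 1) * Real.log q = Real.log x := by
      rw [hx, Real.log_pow]; push_cast; ring
    have hE : ((k : ℝ) + 1) * x * p * Real.log q / (1 - x) ^ 2 + p / (1 - x)
        = p * (x * Real.log x + (1 - x)) / (1 - x) ^ 2 := by
      rw [← hlog]
      field_simp
    have hlt : Real.log x < x - 1 :=
      Real.log_lt_sub_one_of_pos hx0 hx1.ne
    have hgt : 0 < x * Real.log x + (1 - x) := by
      have h2 : Real.log x⁻¹ < x⁻¹ - 1 :=
        Real.log_lt_sub_one_of_pos (inv_pos.2 hx0) (by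
          intro h; exact hx1.ne (by field_simp at h; linarith))
      rw [Real.log_inv] at h2
      have := mul_lt_mul_of_pos_left h2 hx0
      rw [mul_sub, mul_inv_cancel₀ hx0.ne'] at this
      nlinarith
    constructor
    · rw [hE]
      positivity
    · rw [hE]
      rw [div_lt_iff₀ (by positivity)]
      nlinarith [mul_pos hp0 (mul_pos hx0 (by linarith : (0:ℝ) < x - 1 - Real.log x))]
  · have ha : Tendsto (fun k : ℕ => q ^ (k + 1)) atTop (nhds 0) :=
      (tendsto_pow_atTop_nhds_zero_of_lt_one hq0.le hq1).comp (tendsto_add_atTop_nat 1)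
    have hb : Tendsto (fun k : ℕ => ((k : ℝ) + 1) * q ^ (k + 1)) atTop (nhds 0) := by
      have := (tendsto_self_mul_const_pow_of_lt_one hq0.le hq1).comp (tendsto_add_atTop_nat 1)
      simpa [Function.comp_def, push_cast] using this
    have h1 : Tendsto (fun k : ℕ => ((k : ℝ) + 1) * q ^ (k + 1) * p * Real.log q /
        (1 - q ^ (k + 1)) ^ 2) atTop (nhds 0) := by
      have hden : Tendsto (fun k : ℕ => (1 - q ^ (k + 1)) ^ 2) atTop (nhds 1) := by
        have := ((tendsto_const_nhds (x := (1:ℝ))).sub ha).pow 2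
        simpa using this
      have := (((hb.mul_const p).mul_const (Real.log q)).div hden one_ne_zero)
      simpa [Pi.div_def] using this
    have h2 : Tendsto (fun k : ℕ => p / (1 - q ^ (k + 1))) atTop (nhds p) := by
      have := (tendsto_const_nhds (x := p)).div ((tendsto_const_nhds (x := (1:ℝ))).sub ha) (by norm_num : (1:ℝ) - 0 ≠ 0)
      simpa [Pi.div_def] using this
    have := h1.add h2
    simpa using this
end

section
/- Let {X_n} be an i.i.d. sequence of ℤ≥0-valued random variables with P(X_1 ≥ j) > 0 for all j. Fix j ∈ ℤ≥0 and for each k ∈ ℕ let L_{j+k} = min{n ≥ 1 : X_n > j+k} (the first time an observation exceeds j+k), and define ĥ_{j,k} = (∑_{i=1}^{L_{j+k}} 1{X_i = j})/(∑_{i=1}^{L_{j+k}} 1{X_i ≥ j}). Then ĥ_{j,k} → h_j := P(X_1 = j)/P(X_1 ≥ j) almost surely as k → ∞. -/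
open MeasureTheory Filter ProbabilityTheory

lemma slln_ind {Ω : Type*} [MeasurableSpace Ω] (μ : Measure Ω)
    [IsProbabilityMeasure μ] (X : ℕ → Ω → ℕ) (hmeas : ∀ n, Measurable (X n))
    (hindep : iIndepFun X μ)
    (hident : ∀ n, Measure.map (X n) μ = Measure.map (X 0) μ)
    (p : ℕ → Prop) [DecidablePred p] :
    ∀ᵐ ω ∂μ, Tendsto
      (fun n : ℕ => (∑ i ∈ Finset.range n, if p (X i ω) then (1 : ℝ) else 0) / n)
      atTop (nhds (μ {ω | p (X 0 ω)}).toReal) := by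
  set f : ℕ → ℝ := fun m => if p m then (1 : ℝ) else 0 with hf
  have hfm : Measurable f := measurable_from_top
  set Y : ℕ → Ω → ℝ := fun i ω => f (X i ω) with hY
  have hYmeas : ∀ i, Measurable (Y i) := fun i => hfm.comp (hmeas i)
  have hint : Integrable (Y 0) μ := by
    apply (integrable_const (1 : ℝ)).mono' (hYmeas 0).aestronglyMeasurable
    filter_upwards with ω
    simp only [Y, f]
    split_ifs <;> simp
  have hpind : Pairwise (Function.onFun (IndepFun · · μ) Y) := by
    intro i k hik
    exact (hindep.indepFun hik).comp hfm hfm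
  have hpid : ∀ i, IdentDistrib (Y i) (Y 0) μ μ := by
    intro i
    exact (IdentDistrib.mk (hmeas i).aemeasurable (hmeas 0).aemeasurable
      (hident i)).comp hfm
  have hslln := strong_law_ae_real Y hint hpind hpid
  have hE : (μ[Y 0]) = (μ {ω | p (X 0 ω)}).toReal := by
    have : Y 0 = Set.indicator {ω | p (X 0 ω)} (fun _ => (1 : ℝ)) := by
      ext ω
      simp only [Y, f, Set.indicator, Set.mem_setOf_eq]
    have hms : MeasurableSet {ω | p (X 0 ω)} := (hmeas 0) (by trivial)
    rw [this, integral_indicator_const (1 : ℝ) hms]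
    simp
    rfl
  rw [hE] at hslln
  exact hslln

/-- Strong consistency of the hazard rate NPMLE: almost surely,
`ĥ_{j,k} → h_j = P(X = j)/P(X ≥ j)` as `k → ∞`. -/
theorem npmle_strong_consistency {Ω : Type*} [MeasurableSpace Ω] (μ : Measure Ω)
    [IsProbabilityMeasure μ] (X : ℕ → Ω → ℕ) (hmeas : ∀ n, Measurable (X n))
    (hindep : iIndepFun X μ)
    (hident : ∀ n, Measure.map (X n) μ = Measure.map (X 0) μ)
    (hpos : ∀ j : ℕ, 0 < μ {ω | j ≤ X 0 ω}) (j : ℕ) :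
    ∀ᵐ ω ∂μ,
      Tendsto
        (fun k : ℕ =>
          ((∑ i ∈ Finset.range (sInf {n : ℕ | j + k < X n ω} + 1),
              if X i ω = j then (1 : ℝ) else 0) /
            ∑ i ∈ Finset.range (sInf {n : ℕ | j + k < X n ω} + 1),
              if j ≤ X i ω then (1 : ℝ) else 0))
        atTop
        (nhds ((μ {ω | X 0 ω = j}).toReal / (μ {ω | j ≤ X 0 ω}).toReal)) := by
  have hA := slln_ind μ X hmeas hindep hident (fun m => m = j)
  have hB := slln_ind μ X hmeas hindep hident (fun m => j ≤ m)
  have hC : ∀ k : ℕ, ∀ᵐ ω ∂μ, Tendsto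
      (fun n : ℕ => (∑ i ∈ Finset.range n, if j + k < X i ω then (1 : ℝ) else 0) / n)
      atTop (nhds (μ {ω | j + k < X 0 ω}).toReal) :=
    fun k => slln_ind μ X hmeas hindep hident (fun m => j + k < m)
  filter_upwards [hA, hB, ae_all_iff.2 hC] with ω hAω hBω hCω
  -- positivity of the denominator limit
  have hq : 0 < (μ {ω | j ≤ X 0 ω}).toReal :=
    ENNReal.toReal_pos (hpos j).ne' (measure_ne_top μ _)
  -- nonemptiness of the hitting sets
  have hne : ∀ k : ℕ, {n : ℕ | j + k < X n ω}.Nonempty := by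
    intro k
    by_contra h
    rw [Set.not_nonempty_iff_eq_empty] at h
    have hzero : Tendsto
        (fun n : ℕ => (∑ i ∈ Finset.range n, if j + k < X i ω then (1 : ℝ) else 0) / n)
        atTop (nhds 0) := by
      have : ∀ n : ℕ, (∑ i ∈ Finset.range n, if j + k < X i ω then (1 : ℝ) else 0) / n = 0 := by
        intro n
        have : ∀ i ∈ Finset.range n, (if j + k < X i ω then (1 : ℝ) else 0) = 0 := by
          intro i _
          have : i ∉ ({n : ℕ | j + k < X n ω} : Set ℕ) := by rw [h]; exact Set.notMem_empty i
          simp only [Set.mem_setOf_eq] at this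
          simp [this]
        rw [Finset.sum_congr rfl this]
        simp
      rw [funext this]
      exact tendsto_const_nhds
    have hck : (0 : ℝ) < (μ {ω | j + k < X 0 ω}).toReal := by
      have hset : {ω | j + k < X 0 ω} = {ω | j + k + 1 ≤ X 0 ω} := by
        ext ω'; simp only [Set.mem_setOf_eq]; omega
      rw [hset]
      exact ENNReal.toReal_pos (hpos (j + k + 1)).ne' (measure_ne_top μ _)
    have := tendsto_nhds_unique (hCω k) hzero
    exact hck.ne' this
  set N : ℕ → ℕ := fun k => sInf {n : ℕ | j + k < X n ω} + 1 with hN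
  have hNtop : Tendsto N atTop atTop := by
    rw [tendsto_atTop_atTop]
    intro m
    refine ⟨(Finset.range m).sup (fun n => X n ω), fun k hk => ?_⟩
    have hmem := Nat.sInf_mem (hne k)
    simp only [Set.mem_setOf_eq] at hmem
    by_contra hlt
    push_neg at hlt
    have hSm : sInf {n : ℕ | j + k < X n ω} < m := (Nat.lt_succ_self _).trans hlt
    have hsup : X (sInf {n : ℕ | j + k < X n ω}) ω ≤ (Finset.range m).sup (fun n => X n ω) :=
      Finset.le_sup (f := fun n => X n ω) (Finset.mem_range.2 hSm)
    omega
  have hdiv : Tendsto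
      (fun n : ℕ =>
        ((∑ i ∈ Finset.range n, if X i ω = j then (1 : ℝ) else 0) / n) /
        ((∑ i ∈ Finset.range n, if j ≤ X i ω then (1 : ℝ) else 0) / n))
      atTop (nhds ((μ {ω | X 0 ω = j}).toReal / (μ {ω | j ≤ X 0 ω}).toReal)) :=
    hAω.div hBω hq.ne'
  have hcomp := hdiv.comp hNtop
  apply hcomp.congr
  intro k
  have hk0 : ((N k : ℝ)) ≠ 0 := Nat.cast_ne_zero.2 (Nat.succ_ne_zero _)
  simp only [Function.comp]
  show _ / (N k : ℝ) / (_ / (N k : ℝ)) = _ / _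
  rcases eq_or_ne (∑ i ∈ Finset.range (N k), if j ≤ X i ω then (1 : ℝ) else 0) 0 with hb | hb
  · rw [hb]; simp
  · field_simp
    exact (mul_div_cancel_left₀ _ hb).symm
end
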